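/- Let ε, η_ε > 0 with η_ε/ε ∈ ℕ and η_ε ≥ 8ε, let Ω ⊆ U be open subsets of ℝ³, fix q ∈ [2,∞), γ_ε>0 and a curvature cell energy W^curv_ε with constants 0<c≤C₀, and let i ∈ εℤ³ with Q_{3η_ε}(i) ⊆ U. If E ⊆ Z_ε(Ω) is not locally flat in Q_{(3/2)η_ε}(i), then F^curv_ε(E, Q_{3η_ε}(i)) ≥ c′·γ_ε·η_ε^{2−q}, where c′>0 depends only on c (one may take c′ = c/512). -/

import Mathlib

open Set Filter MeasureTheory Metric
open scoped BigOperators ENNReal Topology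

noncomputable section

attribute [local instance] Classical.propDecidable

/-- Three-dimensional Euclidean space. -/
abbrev E3 := EuclideanSpace ℝ (Fin 3)

/-- `x` is a point of the lattice `εℤ³`. -/
def lat (ε : ℝ) (x : E3) : Prop := ∀ k, ∃ n : ℤ, x k = ε * n

/-- `Z_ε(A) := εℤ³ ∩ A`. -/
def Zset (ε : ℝ) (A : Set E3) : Set E3 := {x | lat ε x ∧ x ∈ A}

/-- The half-open cube `Q_ρ(x) = x + ρ[-1/2,1/2)³`. -/
def cube (ρ : ℝ) (x : E3) : Set E3 := {y | ∀ k, x k - ρ / 2 ≤ y k ∧ y k < x k + ρ / 2}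

/-- `k̂ := k + ε(1/2,1/2,1/2)`. -/
def hat (ε : ℝ) (k : E3) : E3 := WithLp.toLp 2 (fun j => k j + ε / 2)

/-- The "half-cube" pattern: the lattice points of `Q_{2ε}(k̂)` whose `m`-th coordinate
equals `v`.  For `v ∈ {k m, k m + ε}` these are exactly the images of the reference
pattern `{k, k+εe₁, k+εe₂, k+ε(e₁+e₂)}` under rotations by multiples of `π/2`
about axes through `k̂` parallel to coordinate vectors. -/
def halfPattern (ε : ℝ) (k : E3) (m : Fin 3) (v : ℝ) : Set E3 :=
  {p | lat ε p ∧ p ∈ cube (2 * ε) (hat ε k) ∧ p m = v}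

/-- `E` is locally flat in `Q_η(x)` (with respect to `U`). -/
def LocallyFlat (ε η : ℝ) (U E : Set E3) (x : E3) : Prop :=
  ∀ k : E3, lat ε k → (cube η x ∩ cube (2 * ε) (hat ε k)).Nonempty →
    E ∩ cube (2 * ε) (hat ε k) = Zset ε (cube (2 * ε) (hat ε k)) ∩ U ∨
    E ∩ cube (2 * ε) (hat ε k) = ∅ ∨
    ∃ m : Fin 3, ∃ v : ℝ, (v = k m ∨ v = k m + ε) ∧
      E ∩ cube (2 * ε) (hat ε k) = halfPattern ε k m v ∩ U

/-- `E` is cubic in `Q_η(x)` (with respect to `U`), at the mesoscale `ηm`. -/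
def CubicSet (ε ηm η : ℝ) (U E : Set E3) (x : E3) : Prop :=
  ∃ i0 ∈ Zset ε (cube ηm (0 : E3)), ∃ K : Finset E3,
    (∀ k ∈ K, ∃ z : Fin 3 → ℤ, ∀ j, k j = i0 j + ηm * (z j : ℝ)) ∧
    E ∩ cube η x = Zset ε (⋃ k ∈ K, cube ηm k) ∩ cube η x ∩ U

/-- `E` is flat in `Q_{ηm}(x)` (with respect to `U`): cubic and locally flat. -/
def FlatSet (ε ηm : ℝ) (U E : Set E3) (x : E3) : Prop :=
  CubicSet ε ηm ηm U E x ∧ LocallyFlat ε ηm U E x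

/-- `E` is a simple coordinate laminate in `A` with normal `e_m` (with respect to `U`):
there is `h : ℝ → {0,1}` with `χ_{Z_ε(A) ∩ E}(i) = h(i·e_m)·χ_{Z_ε(A)}(i)` for all
`i ∈ Z_ε(U)`. -/
def LaminateWith (ε : ℝ) (U A E : Set E3) (m : Fin 3) : Prop :=
  ∃ h : ℝ → Prop, ∀ i ∈ Zset ε U, (i ∈ Zset ε A ∩ E ↔ h (i m) ∧ i ∈ Zset ε A)

/-- `E` is a simple coordinate laminate in `A` (with respect to `U`). -/
def Laminate (ε : ℝ) (U A E : Set E3) : Prop := ∃ m : Fin 3, LaminateWith ε U A E m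

/-- Embedding of `ℤ³` into `ℝ³`. -/
def toE3 (ξ : Fin 3 → ℤ) : E3 := WithLp.toLp 2 (fun j => (ξ j : ℝ))

/-- The coordinate unit vector `e_m` of `ℤ³`. -/
def unitZ (m : Fin 3) : Fin 3 → ℤ := fun j => if j = m then 1 else 0

/-- Discrete anisotropic perimeter energy
`F^per_ε(E,A) = Σ_{i ∈ Z_ε(A) ∩ E} Σ_{ξ ∈ V, i+εξ ∈ Z_ε(U)} ε² c_ξ (1 - χ_E(i+εξ))`. -/
noncomputable def Fper (ε : ℝ) (V : Finset (Fin 3 → ℤ)) (c : (Fin 3 → ℤ) → ℝ)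
    (U E A : Set E3) : ℝ :=
  ∑' i : ↥(Zset ε A ∩ E), ∑ ξ ∈ V,
    if (↑i + ε • toE3 ξ) ∈ Zset ε U ∧ (↑i + ε • toE3 ξ) ∉ E then ε ^ 2 * c ξ else 0

/-- Discrete curvature energy `F^curv_ε(E,A) = Σ_{i ∈ Z_ε(A)} ε³ W(i)`, where
`W i = W^curv_ε(i,E)`. -/
noncomputable def Fcurv (ε : ℝ) (W : E3 → ℝ) (A : Set E3) : ℝ :=
  ∑' i : ↥(Zset ε A), ε ^ 3 * W ↑i

/-- `W` is a curvature cell energy at scale `ε`, mesoscale `ηm`, with parameters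
`γ, q` and constants `0 < cc ≤ C0`, for subsets of `Z_ε(Ω)`, flatness being understood
with respect to `U`. -/
def IsCurvCell (ε ηm γ q cc C0 : ℝ) (Ω U : Set E3) (W : E3 → Set E3 → ℝ) : Prop :=
  (∀ i E, lat ε i → E ⊆ Zset ε Ω → 0 ≤ W i E) ∧
  (∀ i E, lat ε i → E ⊆ Zset ε Ω → FlatSet ε ηm U E i → W i E = 0) ∧
  (∀ i E, lat ε i → E ⊆ Zset ε Ω → ¬ LocallyFlat ε ηm U E i →
      cc * γ * ηm ^ (-1 - q : ℝ) ≤ W i E) ∧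
  (∀ i E, lat ε i → E ⊆ Zset ε Ω → CubicSet ε ηm ηm U E i →
      W i E ≤ C0 * γ * ηm ^ (-1 - q : ℝ))

/-- The `ηm`-scale replacement
`E_{ηm} := ⋃ {Z_ε(Q_{ηm}(i)) : i ∈ ηmℤ³, E ∩ Q_{ηm}(i) ≠ ∅} ∩ Ω`. -/
def etaRepl (ε ηm : ℝ) (Ω E : Set E3) : Set E3 :=
  {x | lat ε x ∧ x ∈ Ω ∧
    ∃ i : E3, (∀ j, ∃ n : ℤ, i j = ηm * n) ∧ x ∈ cube ηm i ∧ (E ∩ cube ηm i).Nonempty}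

/- The bad `2ε`-cell witnessing that `E` is not locally flat in `Q_{(3/2)η}(i)` meets every
`Q_η(j)` that contains one of its points `x₀`; there are `(η/ε)³` lattice points `j` with
`x₀ ∈ Q_η(j)`, all inside `Q_{3η}(i)`, and each contributes `ε³ · c γ η^{-1-q}`. The total is
`c γ η^{2-q}`. -/

lemma Zset_cube_finite {ε : ℝ} (hε : 0 < ε) (ρ : ℝ) (x : E3) :
    (Zset ε (cube ρ x)).Finite := by
  have hfloor : ∀ m : ℤ, ⌊(ε * (m : ℝ)) / ε⌋ = m := fun m => by
    rw [mul_div_cancel_left₀ _ hε.ne', Int.floor_intCast]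
  apply Set.Finite.of_finite_image (f := fun p : E3 => fun l : Fin 3 => ⌊p l / ε⌋)
  · refine (Set.Finite.pi fun l : Fin 3 =>
      Set.finite_Icc ⌈(x l - ρ / 2) / ε⌉ ⌊(x l + ρ / 2) / ε⌋).subset ?_
    rintro _ ⟨p, ⟨hlat, hcube⟩, rfl⟩ l -
    obtain ⟨m, hm⟩ := hlat l
    have hb := hcube l
    rw [hm] at hb
    simp only [Set.mem_Icc, hm, hfloor]
    exact ⟨Int.ceil_le.mpr ((div_le_iff₀ hε).mpr (by linarith [hb.1])),
      Int.le_floor.mpr ((le_div_iff₀ hε).mpr (by linarith [hb.2]))⟩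
  · intro p hp p' hp' h
    ext l
    obtain ⟨m, hm⟩ := hp.1 l
    obtain ⟨m', hm'⟩ := hp'.1 l
    have h1 : ⌊p l / ε⌋ = ⌊p' l / ε⌋ := congrFun h l
    rw [hm, hm', hfloor, hfloor] at h1
    rw [hm, hm', h1]

lemma sum_le_Fcurv {ε : ℝ} (hε : 0 ≤ ε) {W : E3 → ℝ} {A : Set E3}
    (hfin : (Zset ε A).Finite) (hW : ∀ x ∈ Zset ε A, 0 ≤ W x)
    {P : Finset E3} (hP : ↑P ⊆ Zset ε A) :
    ∑ x ∈ P, ε ^ 3 * W x ≤ Fcurv ε W A := by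
  have := hfin.fintype
  rw [Fcurv, tsum_fintype, Finset.sum_set_coe (f := fun x => ε ^ 3 * W x)]
  refine Finset.sum_le_sum_of_subset_of_nonneg (fun x hx => ?_) fun x hx _ => ?_
  · exact Set.mem_toFinset.mpr (hP hx)
  · exact mul_nonneg (by positivity) (hW x (Set.mem_toFinset.mp hx))

lemma mem_cube_add_of_mem_cube {a b : ℝ} {x i j : E3} (hxi : x ∈ cube a i)
    (hxj : x ∈ cube b j) : j ∈ cube (a + b) i := fun l => by
  have := hxi l
  have := hxj l
  constructor <;> linarith

lemma cube_mono {ρ ρ' : ℝ} (h : ρ ≤ ρ') (x : E3) : cube ρ x ⊆ cube ρ' x := fun y hy l => by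
  have := hy l
  constructor <;> linarith

lemma exists_mem_cube_forall_not_locallyFlat {ε η : ℝ} {U E : Set E3} {x : E3}
    (h : ¬ LocallyFlat ε η U E x) :
    ∃ x₀ ∈ cube η x, ∀ η' y, x₀ ∈ cube η' y → ¬ LocallyFlat ε η' U E y := by
  simp only [LocallyFlat, not_forall] at h
  obtain ⟨k, hk, ⟨x₀, hx₀, hcell⟩, hbad⟩ := h
  exact ⟨x₀, hx₀, fun η' y hy hflat => hbad (hflat k hk ⟨x₀, hy, hcell⟩)⟩

lemma mul_mem_Ioc_of_mem_Ioc_floor {ε : ℝ} (hε : 0 < ε) (t : ℝ) (n : ℕ) {z : ℤ}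
    (hz : z ∈ Finset.Ioc ⌊t / ε⌋ (⌊t / ε⌋ + n)) : ε * z ∈ Set.Ioc t (t + n * ε) := by
  obtain ⟨h1, h2⟩ := Finset.mem_Ioc.mp hz
  have h1' : (⌊t / ε⌋ : ℝ) + 1 ≤ z := by exact_mod_cast h1
  have h2' : (z : ℝ) ≤ ⌊t / ε⌋ + n := by exact_mod_cast h2
  have hL : (⌊t / ε⌋ : ℝ) * ε ≤ t := (le_div_iff₀ hε).mp (Int.floor_le _)
  have hU : t < ((⌊t / ε⌋ : ℝ) + 1) * ε := (div_lt_iff₀ hε).mp (Int.lt_floor_add_one _)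
  constructor <;> nlinarith

lemma exists_finset_lat_mem_cube {ε : ℝ} (hε : 0 < ε) (n : ℕ) (x₀ : E3) :
    ∃ P : Finset E3, P.card = n ^ 3 ∧ ∀ j ∈ P, lat ε j ∧ x₀ ∈ cube (n * ε) j := by
  set B : Fin 3 → Finset ℤ := fun l =>
    Finset.Ioc ⌊(x₀ l - n * ε / 2) / ε⌋ (⌊(x₀ l - n * ε / 2) / ε⌋ + n)
  have hinj : Function.Injective fun z : Fin 3 → ℤ => ε • toE3 z := fun z z' h =>
    funext fun l => by
      have h1 : ε * (z l : ℝ) = ε * (z' l : ℝ) := by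
        simpa [toE3] using congrArg (fun v : E3 => v l) h
      exact_mod_cast mul_left_cancel₀ hε.ne' h1
  refine ⟨(Fintype.piFinset B).image fun z => ε • toE3 z, ?_, ?_⟩
  · rw [Finset.card_image_of_injective _ hinj, Fintype.card_piFinset]
    simp [B, Int.card_Ioc]
  · simp only [Finset.mem_image, Fintype.mem_piFinset]
    rintro _ ⟨z, hz, rfl⟩
    refine ⟨fun l => ⟨z l, by simp [toE3]⟩, fun l => ?_⟩
    have := Set.mem_Ioc.mp (mul_mem_Ioc_of_mem_Ioc_floor hε _ n (hz l))
    simp only [toE3, PiLp.smul_apply, smul_eq_mul]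
    constructor <;> linarith

theorem statement4_general (ε ηm : ℝ) (hε : 0 < ε) (hratio : ∃ n : ℕ, ηm = (n : ℝ) * ε)
    (h8 : 8 * ε ≤ ηm)
    (Ω U : Set E3)
    (q : ℝ) (γ cc C0 : ℝ) (hγ : 0 < γ) (hcc : 0 < cc)
    (W : E3 → Set E3 → ℝ) (hW : IsCurvCell ε ηm γ q cc C0 Ω U W)
    (i : E3)
    (E : Set E3) (hE : E ⊆ Zset ε Ω)
    (hnflat : ¬ LocallyFlat ε ((3 / 2) * ηm) U E i) :
    cc / 512 * γ * ηm ^ ((2 : ℝ) - q) ≤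
      Fcurv ε (fun j => W j E) (cube (3 * ηm) i) := by
  obtain ⟨n, rfl⟩ := hratio
  obtain ⟨hW0, -, hWlb, -⟩ := hW
  have hη : 0 < n * ε := by linarith
  obtain ⟨x₀, hx₀, hbad⟩ := exists_mem_cube_forall_not_locallyFlat hnflat
  obtain ⟨P, hcard, hP⟩ := exists_finset_lat_mem_cube hε n x₀
  have hPsub : ↑P ⊆ Zset ε (cube (3 * (n * ε)) i) := fun j hj =>
    ⟨(hP j hj).1, cube_mono (by linarith) i (mem_cube_add_of_mem_cube hx₀ (hP j hj).2)⟩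
  have hPlb : ∀ j ∈ P, ε ^ 3 * (cc * γ * (n * ε) ^ (-1 - q)) ≤ ε ^ 3 * W j E := fun j hj =>
    mul_le_mul_of_nonneg_left (hWlb j E (hP j hj).1 hE (hbad _ j (hP j hj).2)) (by positivity)
  have hsplit : (n * ε) ^ (2 - q) = (n * ε) ^ 3 * (n * ε) ^ (-1 - q) := by
    rw [← Real.rpow_natCast, ← Real.rpow_add hη]
    congr 1; push_cast; ring
  calc cc / 512 * γ * (n * ε) ^ (2 - q)
      ≤ cc * γ * (n * ε) ^ (2 - q) := by
        have := Real.rpow_pos_of_pos hη (2 - q)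
        nlinarith [mul_pos (mul_pos hcc hγ) this]
    _ = P.card • (ε ^ 3 * (cc * γ * (n * ε) ^ (-1 - q))) := by
        rw [hsplit, hcard, nsmul_eq_mul]; push_cast; ring
    _ ≤ ∑ j ∈ P, ε ^ 3 * W j E := Finset.card_nsmul_le_sum P _ _ hPlb
    _ ≤ Fcurv ε (fun j => W j E) (cube (3 * (n * ε)) i) :=
        sum_le_Fcurv hε.le (Zset_cube_finite hε _ i) (fun j hj => hW0 j E hj.1 hE) hPsub

/-- If `E` is not locally flat in `Q_{(3/2)η_ε}(i)` then the
curvature energy in `Q_{3η_ε}(i)` is at least `(c/512)·γ_ε·η_ε^{2-q}`. -/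
theorem statement4 (ε ηm : ℝ) (hε : 0 < ε) (hratio : ∃ n : ℕ, ηm = (n : ℝ) * ε)
    (h8 : 8 * ε ≤ ηm)
    (Ω U : Set E3) (hΩ : IsOpen Ω) (hU : IsOpen U) (hΩU : Ω ⊆ U)
    (q : ℝ) (hq : 2 ≤ q) (γ cc C0 : ℝ) (hγ : 0 < γ) (hcc : 0 < cc) (hccC0 : cc ≤ C0)
    (W : E3 → Set E3 → ℝ) (hW : IsCurvCell ε ηm γ q cc C0 Ω U W)
    (i : E3) (hi : lat ε i) (hQU : cube (3 * ηm) i ⊆ U)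
    (E : Set E3) (hE : E ⊆ Zset ε Ω)
    (hnflat : ¬ LocallyFlat ε ((3 / 2) * ηm) U E i) :
    cc / 512 * γ * ηm ^ ((2 : ℝ) - q) ≤
      Fcurv ε (fun j => W j E) (cube (3 * ηm) i) :=
  statement4_general ε ηm hε hratio h8 Ω U q γ cc C0 hγ hcc W hW i E hE hnflat
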